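/- arXiv:2311.17384 — 2 statements merged into one kernel-verified Lean document; each statement's English description precedes it below -/
import Mathlib

section
/- Let q1,...,qn ∈ (Z_2)^n and suppose the matrix with rows q1,...,qn has rank r over Z_2. Let ψ ∈ C^{2^n} be a nonzero simultaneous eigenvector of the commuting Pauli operators W(p_j,q_j) with eigenvalues (-1)^{λ_j}, j=1,...,n, where {(p_j,q_j)} spans a Lagrangian subspace of (Z_2)^{2n}. Then ψ has nonzero amplitude on exactly 2^r computational basis states. -/
open scoped Matrix ComplexConjugate

/-- Bit vectors of length `n` over `ℤ/2`. -/
abbrev V2 (n : ℕ) := Fin n → ZMod 2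

/-- Dot product over `ℤ/2`. -/
def dotZ2 {n : ℕ} (a b : V2 n) : ZMod 2 := ∑ i, a i * b i

/-- The symplectic product on `(ℤ/2)^{2n}`: `[(p₁,q₁),(p₂,q₂)] = p₁·q₂ - p₂·q₁`. -/
def symp {n : ℕ} (x y : V2 n × V2 n) : ZMod 2 := dotZ2 x.1 y.2 - dotZ2 y.1 x.2

/-- The computational basis vector `|z⟩` in `ℂ^{2^n}`. -/
noncomputable def basisVec {n : ℕ} (z : V2 n) : V2 n → ℂ := fun y => if y = z then 1 else 0

/-- The Pauli operator `W(p,q) = (-i)^{p·q mod 4} Z^p X^q`, where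
`Z^p X^q |z⟩ = (-1)^{(z+q)·p} |z+q⟩` (bits of `p·q` lifted to integers). -/
noncomputable def W {n : ℕ} (p q : V2 n) : Matrix (V2 n) (V2 n) ℂ :=
  Matrix.of fun y z =>
    if y = z + q then
      (-Complex.I) ^ ((∑ i, (p i).val * (q i).val) % 4) * (-1 : ℂ) ^ (dotZ2 (z + q) p).val
    else 0
/-- A subspace of `(ℤ/2)^{2n}` is isotropic if the symplectic form vanishes on it. -/
def IsIsotropic {n : ℕ} (L : Submodule (ZMod 2) (V2 n × V2 n)) : Prop :=
  ∀ x ∈ L, ∀ y ∈ L, symp x y = 0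

/-- A Lagrangian subspace: a maximal isotropic subspace of `(ℤ/2)^{2n}`. -/
def IsLagrangian {n : ℕ} (L : Submodule (ZMod 2) (V2 n × V2 n)) : Prop :=
  IsIsotropic L ∧ ∀ L', IsIsotropic L' → L ≤ L' → L' = L

/-!
Every element `(a, b)` of `L = span {(p j, q j)}` acts on `ψ` by a signed translation,
`ψ (y + b) = g (-1)^{y·a} ψ y` with `g ≠ 0`: the generators do so by the eigenvalue equations, and
such pairs are closed under addition. Hence the support of `ψ` is stable under translation by
`Q = span {q j}`, and `y ↦ y·a` is constant on it whenever `(a, 0) ∈ L`. Maximality of `L` gives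
`(a, 0) ∈ L` for every `a ∈ Q^⊥`, so differences of points of the support lie in `Q^⊥⊥ = Q`.
The support is therefore a coset of `Q`, of cardinality `2^{dim Q} = 2^{rank}`.
-/

section Sign

variable {R : Type*}

theorem neg_one_pow_val_add [Ring R] (a b : ZMod 2) :
    (-1 : R) ^ (a + b).val = (-1) ^ a.val * (-1) ^ b.val := by
  rw [ZMod.val_add, ← neg_one_pow_eq_pow_mod_two, pow_add]

theorem neg_one_pow_val_mul_self [Ring R] (a : ZMod 2) : (-1 : R) ^ a.val * (-1) ^ a.val = 1 := by
  rw [← neg_one_pow_val_add, ZModModule.add_self, ZMod.val_zero, pow_zero]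

theorem neg_one_pow_val_eq_one_iff [Monoid R] [HasDistribNeg R] (h : (-1 : R) ≠ 1)
    (a : ZMod 2) : (-1 : R) ^ a.val = 1 ↔ a = 0 := by
  obtain rfl | rfl : a = 0 ∨ a = 1 := by revert a; decide
  · simp
  · simpa [ZMod.val_one] using h

end Sign

theorem dotProductBilin_nondegenerate {K m : Type*} [Field K] [Fintype m] :
    (dotProductBilin K K : LinearMap.BilinForm K (m → K)).Nondegenerate :=
  ⟨fun x hx => dotProduct_eq_zero x hx,
    fun y hy => dotProduct_eq_zero y fun x => by rw [dotProduct_comm]; exact hy x⟩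

theorem dotProductBilin_isRefl {K m : Type*} [CommRing K] [Fintype m] :
    (dotProductBilin K K : LinearMap.BilinForm K (m → K)).IsRefl := fun x y h =>
  (dotProduct_comm y x).trans h

section Pauli

variable {n : ℕ}

theorem dotZ2_eq_dotProduct (a b : V2 n) : dotZ2 a b = a ⬝ᵥ b := rfl

theorem dotZ2_add_left (a b c : V2 n) : dotZ2 (a + b) c = dotZ2 a c + dotZ2 b c :=
  add_dotProduct a b c

theorem symp_comm (x y : V2 n × V2 n) : symp x y = symp y x := by
  rw [symp, symp, ZModModule.sub_eq_add, ZModModule.sub_eq_add, add_comm]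

def dotForm (n : ℕ) : LinearMap.BilinForm (ZMod 2) (V2 n) := dotProductBilin (ZMod 2) (ZMod 2)

theorem dotForm_apply (a b : V2 n) : dotForm n a b = dotZ2 a b := rfl

def sympForm (n : ℕ) : LinearMap.BilinForm (ZMod 2) (V2 n × V2 n) :=
  (dotProductBilin (ZMod 2) (ZMod 2)).compl₁₂ (LinearMap.fst _ _ _) (LinearMap.snd _ _ _) -
    ((dotProductBilin (ZMod 2) (ZMod 2)).compl₁₂ (LinearMap.fst _ _ _) (LinearMap.snd _ _ _)).flip

theorem sympForm_apply (x y : V2 n × V2 n) : sympForm n x y = symp x y := rfl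

theorem IsIsotropic.sup_span_singleton {L : Submodule (ZMod 2) (V2 n × V2 n)} {v : V2 n × V2 n}
    (hL : IsIsotropic L) (hv : ∀ x ∈ L, symp v x = 0) :
    IsIsotropic (L ⊔ Submodule.span (ZMod 2) {v}) := by
  have hvv : symp v v = 0 := by rw [symp, dotZ2_eq_dotProduct, dotProduct_comm, sub_self]
  intro x hx y hy
  obtain ⟨x, hxL, w, hw, rfl⟩ := Submodule.mem_sup.mp hx
  obtain ⟨y, hyL, u, hu, rfl⟩ := Submodule.mem_sup.mp hy
  obtain ⟨c, hc⟩ := (Submodule.mem_span_singleton (R := ZMod 2)).mp hw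
  obtain ⟨d, hd⟩ := (Submodule.mem_span_singleton (R := ZMod 2)).mp hu
  subst hc hd
  rw [← sympForm_apply]
  simp only [map_add, map_smul, LinearMap.add_apply, LinearMap.smul_apply, sympForm_apply]
  rw [hL x hxL y hyL, hv y hyL, symp_comm x v, hv x hxL, hvv]
  simp

theorem IsLagrangian.mem_of_forall_symp_eq_zero {L : Submodule (ZMod 2) (V2 n × V2 n)}
    {v : V2 n × V2 n} (hL : IsLagrangian L) (hv : ∀ x ∈ L, symp v x = 0) : v ∈ L :=
  hL.2 _ (hL.1.sup_span_singleton hv) le_sup_left ▸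
    Submodule.mem_sup_right (Submodule.mem_span_singleton_self v)

theorem IsLagrangian.mk_zero_mem_of_mem_orthogonal {L : Submodule (ZMod 2) (V2 n × V2 n)}
    (hL : IsLagrangian L) {a : V2 n}
    (ha : a ∈ (dotForm n).orthogonal (L.map (LinearMap.snd (ZMod 2) (V2 n) (V2 n)))) :
    (a, 0) ∈ L :=
  hL.mem_of_forall_symp_eq_zero fun x hx => by
    have := ha x.2 ⟨x, hx, rfl⟩
    rw [dotForm_apply] at this
    rw [symp, dotZ2_eq_dotProduct, dotZ2_eq_dotProduct, dotProduct_zero, sub_zero, dotProduct_comm]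
    exact this

theorem W_mulVec_apply (a b : V2 n) (ψ : V2 n → ℂ) (y : V2 n) :
    (W a b *ᵥ ψ) y =
      (-Complex.I) ^ ((∑ i, (a i).val * (b i).val) % 4) * (-1) ^ (dotZ2 y a).val * ψ (y + b) := by
  rw [Matrix.mulVec, dotProduct, Finset.sum_eq_single (y + b)]
  · simp [W, add_assoc, ZModModule.add_self]
  · intro z _ hz
    have : y ≠ z + b := fun h => hz (by rw [h, add_assoc, ZModModule.add_self, add_zero])
    simp [W, this]
  · simp

/-- `x ∈ signedShifts ψ` says that `Z^{x.1} X^{x.2} ψ` is a nonzero multiple of `ψ`. -/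
def signedShifts (ψ : V2 n → ℂ) : Submodule (ZMod 2) (V2 n × V2 n) :=
  AddSubgroup.toZModSubmodule 2
    { carrier := {x | ∃ g : ℂ, g ≠ 0 ∧ ∀ y, ψ (y + x.2) = g * (-1) ^ (dotZ2 y x.1).val * ψ y}
      zero_mem' := ⟨1, one_ne_zero, fun y => by simp [dotZ2]⟩
      add_mem' := by
        rintro ⟨a₁, b₁⟩ ⟨a₂, b₂⟩ ⟨g₁, hg₁, h₁⟩ ⟨g₂, hg₂, h₂⟩
        refine ⟨g₁ * g₂ * (-1) ^ (dotZ2 b₁ a₂).val,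
          mul_ne_zero (mul_ne_zero hg₁ hg₂) (pow_ne_zero _ (neg_ne_zero.mpr one_ne_zero)),
          fun y => ?_⟩
        calc ψ (y + (b₁ + b₂)) = ψ (y + b₁ + b₂) := by rw [add_assoc]
          _ = g₂ * (-1) ^ (dotZ2 (y + b₁) a₂).val * (g₁ * (-1) ^ (dotZ2 y a₁).val * ψ y) := by
            rw [h₂, h₁]
          _ = _ := by
            simp only [Prod.fst_add, dotZ2_eq_dotProduct, add_dotProduct, dotProduct_add,
              neg_one_pow_val_add]
            ring
      neg_mem' := fun {x} hx => by rwa [ZModModule.neg_eq_self x] }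

theorem mk_mem_signedShifts_of_mulVec_eq_smul {a b : V2 n} {ψ : V2 n → ℂ} {c : ℂ} (hc : c ≠ 0)
    (h : W a b *ᵥ ψ = c • ψ) : (a, b) ∈ signedShifts ψ := by
  set φ : ℂ := (-Complex.I) ^ ((∑ i, (a i).val * (b i).val) % 4)
  have hφ : φ ≠ 0 := pow_ne_zero _ (neg_ne_zero.mpr Complex.I_ne_zero)
  refine ⟨φ⁻¹ * c, mul_ne_zero (inv_ne_zero hφ) hc, fun y => ?_⟩
  have hy := congrFun h y
  rw [W_mulVec_apply, Pi.smul_apply, smul_eq_mul] at hy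
  have hs := neg_one_pow_val_mul_self (R := ℂ) (dotZ2 y a)
  have hφφ : φ⁻¹ * φ = 1 := inv_mul_cancel₀ hφ
  linear_combination (φ⁻¹ * (-1) ^ (dotZ2 y a).val) * hy - ψ (y + b) * hs
    - ψ (y + b) * (-1) ^ (dotZ2 y a).val * (-1) ^ (dotZ2 y a).val * hφφ

theorem apply_add_ne_zero_of_mem_signedShifts {ψ : V2 n → ℂ} {a b y : V2 n}
    (hx : (a, b) ∈ signedShifts ψ) (hy : ψ y ≠ 0) : ψ (y + b) ≠ 0 := by
  obtain ⟨g, hg, h⟩ := hx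
  rw [h y]
  exact mul_ne_zero (mul_ne_zero hg (pow_ne_zero _ (neg_ne_zero.mpr one_ne_zero))) hy

theorem dotZ2_add_eq_zero_of_mem_signedShifts {ψ : V2 n → ℂ} {a y z : V2 n}
    (hx : (a, 0) ∈ signedShifts ψ) (hy : ψ y ≠ 0) (hz : ψ z ≠ 0) : dotZ2 (y + z) a = 0 := by
  obtain ⟨g, -, h⟩ := hx
  have key : ∀ {w}, ψ w ≠ 0 → g * (-1) ^ (dotZ2 w a).val = 1 := fun {w} hw =>
    mul_right_cancel₀ hw (by simpa using (h w).symm)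
  have hs := neg_one_pow_val_mul_self (R := ℂ) (dotZ2 z a)
  rw [← neg_one_pow_val_eq_one_iff (R := ℂ) (by norm_num), dotZ2_add_left, neg_one_pow_val_add]
  linear_combination (-1 : ℂ) ^ (dotZ2 z a).val * ((-1 : ℂ) ^ (dotZ2 z a).val * key hy
    - (-1 : ℂ) ^ (dotZ2 y a).val * key hz) + hs

theorem support_eq_image_add {L : Submodule (ZMod 2) (V2 n × V2 n)} (hLag : IsLagrangian L)
    {ψ : V2 n → ℂ} (hL : L ≤ signedShifts ψ) {y₀ : V2 n} (hy₀ : ψ y₀ ≠ 0) :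
    Function.support ψ = (y₀ + ·) '' (L.map (LinearMap.snd (ZMod 2) (V2 n) (V2 n))) := by
  ext z
  constructor
  · intro hz
    refine ⟨y₀ + z, ?_, by
      show y₀ + (y₀ + z) = z
      rw [← add_assoc, ZModModule.add_self, zero_add]⟩
    rw [← LinearMap.BilinForm.orthogonal_orthogonal (B := dotForm n) dotProductBilin_nondegenerate
      dotProductBilin_isRefl (L.map _)]
    intro a ha
    rw [dotForm_apply, dotZ2_eq_dotProduct, dotProduct_comm]
    exact dotZ2_add_eq_zero_of_mem_signedShifts (hL (hLag.mk_zero_mem_of_mem_orthogonal ha)) hy₀ hz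
  · rintro ⟨_, ⟨⟨a, b⟩, hab, rfl⟩, rfl⟩
    exact apply_add_ne_zero_of_mem_signedShifts (hL hab) hy₀

theorem card_support_eq_two_pow_finrank {L : Submodule (ZMod 2) (V2 n × V2 n)}
    (hLag : IsLagrangian L) {ψ : V2 n → ℂ} (hψ : ψ ≠ 0) (hL : L ≤ signedShifts ψ) :
    Nat.card {z // ψ z ≠ 0} =
      2 ^ Module.finrank (ZMod 2) (L.map (LinearMap.snd (ZMod 2) (V2 n) (V2 n))) := by
  obtain ⟨y₀, hy₀⟩ := Function.ne_iff.mp hψ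
  calc Nat.card {z // ψ z ≠ 0}
      = Nat.card ((y₀ + ·) '' (L.map (LinearMap.snd (ZMod 2) (V2 n) (V2 n)) : Set (V2 n))) :=
        Nat.card_congr (Equiv.setCongr (support_eq_image_add hLag hL hy₀))
    _ = Nat.card (L.map (LinearMap.snd (ZMod 2) (V2 n) (V2 n))) :=
        Nat.card_image_of_injective (add_right_injective y₀) _
    _ = _ := by rw [Module.natCard_eq_pow_finrank (K := ZMod 2), Nat.card_zmod]

end Pauli

/-- A stabiliser state whose `q`-part matrix has rank `r` over `ℤ/2` is supported
on exactly `2^r` computational basis states. -/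
theorem stab_support_card {n : ℕ} (p q : Fin n → V2 n) (lam : Fin n → ZMod 2)
    (hLag : IsLagrangian (Submodule.span (ZMod 2) (Set.range fun j => (p j, q j))))
    (ψ : V2 n → ℂ) (hψ : ψ ≠ 0)
    (heig : ∀ j, (W (p j) (q j)).mulVec ψ = ((-1 : ℂ) ^ (lam j).val) • ψ) :
    Nat.card {z : V2 n // ψ z ≠ 0} = 2 ^ (Matrix.of fun j i => q j i).rank := by
  have hL : Submodule.span (ZMod 2) (Set.range fun j => (p j, q j)) ≤ signedShifts ψ :=
    Submodule.span_le.mpr <| Set.range_subset_iff.mpr fun j =>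
      mk_mem_signedShifts_of_mulVec_eq_smul (pow_ne_zero _ (neg_ne_zero.mpr one_ne_zero)) (heig j)
  have hQ : (Submodule.span (ZMod 2) (Set.range fun j => (p j, q j))).map
      (LinearMap.snd (ZMod 2) (V2 n) (V2 n)) = Submodule.span (ZMod 2) (Set.range q) := by
    rw [Submodule.map_span, ← Set.range_comp]
    rfl
  rw [card_support_eq_two_pow_finrank hLag hψ hL, hQ, Matrix.rank_eq_finrank_span_row]
  rfl
end

section
/- Let S be a finite set of nonzero vectors spanning C^d, containing a distinguished basis B, and suppose there is a function σ: S → N with: σ(b) minimal on B, and every s ∈ S∖B can be written as a linear combination of two elements of S of strictly smaller σ-value. For each s ∈ S∖B, let D_s be the corresponding 3-term dependency (assigning coefficient 1 to s). Then {D_s : s ∈ S∖B} is a basis of the space of linear dependencies of S. -/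
/-- The evaluation map sending a formal linear combination `α : S → ℂ`
to the vector `∑_{s ∈ S} α(s) • s` in `ℂ^d`. -/
noncomputable def evalD {d : ℕ} (S : Finset (Fin d → ℂ)) : (S → ℂ) →ₗ[ℂ] (Fin d → ℂ) where
  toFun α := ∑ s : S, α s • (s : Fin d → ℂ)
  map_add' a b := by simp [add_smul, Finset.sum_add_distrib]
  map_smul' c a := by simp [smul_smul, Finset.smul_sum]

open Classical in
/-- The 3-term dependency `D_s` assigning `1` to `s` and the negated coefficients to the
two smaller-`σ` elements `t₁ s`, `t₂ s` expressing `s = c₁ s • t₁ s + c₂ s • t₂ s`. -/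
noncomputable def tripleDep {d : ℕ} (S : Finset (Fin d → ℂ))
    (t₁ t₂ : (Fin d → ℂ) → (Fin d → ℂ)) (c₁ c₂ : (Fin d → ℂ) → ℂ)
    (s : Fin d → ℂ) : S → ℂ :=
  fun u => (if (u : Fin d → ℂ) = s then 1 else 0)
    - (if (u : Fin d → ℂ) = t₁ s then c₁ s else 0)
    - (if (u : Fin d → ℂ) = t₂ s then c₂ s else 0)

/-!
Each `D_s` has coefficient `1` at `s`, and its other nonzero coefficients sit at elements of
strictly smaller `σ`. Ordered by `σ`, the family is therefore triangular, hence linearly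
independent. It lies in the kernel of `α ↦ ∑ α(s) • s`, which is onto `ℂ^d` because `S ⊇ B`,
so the kernel has dimension `|S| - |B| = |S ∖ B|`, the number of the `D_s`.
-/

open Finset

theorem linearIndependent_of_triangular {ι κ R α : Type*} [Ring R] [NoZeroDivisors R]
    [LinearOrder α] (v : ι → κ → R) (e : ι → κ) (w : ι → α) (hdiag : ∀ i, v i (e i) ≠ 0)
    (hlower : ∀ i j, j ≠ i → v j (e i) ≠ 0 → w i < w j) :
    LinearIndependent R v := by
  classical
  rw [linearIndependent_iff']
  intro s g hg
  by_contra! hsupp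
  obtain ⟨j, hj, hgj⟩ := hsupp
  obtain ⟨i, hi, hmax⟩ := (s.filter (g · ≠ 0)).exists_max_image w ⟨j, mem_filter.2 ⟨hj, hgj⟩⟩
  rw [mem_filter] at hi
  have hcoord : ∑ j ∈ s, g j * v j (e i) = g i * v i (e i) := by
    refine sum_eq_single_of_mem i hi.1 fun j hj hji => ?_
    by_cases hgj : g j = 0
    · simp [hgj]
    · have hle : w j ≤ w i := hmax j (mem_filter.2 ⟨hj, hgj⟩)
      have hv : v j (e i) = 0 := by
        by_contra hv
        exact hle.not_gt (hlower i j hji hv)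
      simp [hv]
  have hzero := congrFun hg (e i)
  simp only [Finset.sum_apply, Pi.smul_apply, smul_eq_mul, Pi.zero_apply, hcoord] at hzero
  exact mul_ne_zero hi.2 (hdiag i) hzero

section Dependencies

variable {d : ℕ} (S : Finset (Fin d → ℂ))

theorem evalD_eq_linearCombination :
    evalD S = Fintype.linearCombination ℂ ((↑) : S → Fin d → ℂ) :=
  rfl

open Classical in
theorem evalD_ite {a : Fin d → ℂ} (ha : a ∈ S) (c : ℂ) :
    evalD S (fun u => if (u : Fin d → ℂ) = a then c else 0) = c • a := by
  have : (fun u : S => if (u : Fin d → ℂ) = a then c else 0) = Pi.single ⟨a, ha⟩ c := by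
    ext u
    simp [Pi.single_apply, Subtype.ext_iff]
  rw [this, evalD_eq_linearCombination, Fintype.linearCombination_apply_single]

theorem range_evalD_eq_top {B : Finset (Fin d → ℂ)} (hBS : B ⊆ S)
    (hBspan : Submodule.span ℂ (B : Set (Fin d → ℂ)) = ⊤) :
    LinearMap.range (evalD S) = ⊤ := by
  rw [evalD_eq_linearCombination, Fintype.range_linearCombination, Subtype.range_coe_subtype,
    eq_top_iff, ← hBspan]
  exact Submodule.span_mono hBS

theorem finrank_ker_evalD {B : Finset (Fin d → ℂ)} (hBS : B ⊆ S)
    (hBind : LinearIndependent ℂ (fun b : B => (b : Fin d → ℂ)))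
    (hBspan : Submodule.span ℂ (B : Set (Fin d → ℂ)) = ⊤) :
    Module.finrank ℂ (LinearMap.ker (evalD S)) = #(S \ B) := by
  have hB : #B = d := by
    simpa using (Module.finrank_eq_card_basis (.mk hBind (by simp [hBspan]))).symm
  have hrank := LinearMap.finrank_range_add_finrank_ker (evalD S)
  rw [range_evalD_eq_top S hBS hBspan, finrank_top] at hrank
  simp only [Module.finrank_fintype_fun_eq_card, Fintype.card_fin, Fintype.card_coe] at hrank
  rw [card_sdiff_of_subset hBS]
  omega

variable (t₁ t₂ : (Fin d → ℂ) → (Fin d → ℂ)) (c₁ c₂ : (Fin d → ℂ) → ℂ) {s : Fin d → ℂ}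

theorem tripleDep_mem_ker (hs : s ∈ S) (h₁ : t₁ s ∈ S) (h₂ : t₂ s ∈ S)
    (hdec : s = c₁ s • t₁ s + c₂ s • t₂ s) :
    tripleDep S t₁ t₂ c₁ c₂ s ∈ LinearMap.ker (evalD S) := by
  have : tripleDep S t₁ t₂ c₁ c₂ s =
      (fun u : S => if (u : Fin d → ℂ) = s then 1 else 0)
        - (fun u : S => if (u : Fin d → ℂ) = t₁ s then c₁ s else 0)
        - (fun u : S => if (u : Fin d → ℂ) = t₂ s then c₂ s else 0) := rfl
  rw [LinearMap.mem_ker, this, map_sub, map_sub, evalD_ite S hs, evalD_ite S h₁,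
    evalD_ite S h₂, one_smul, sub_sub, sub_eq_zero]
  exact hdec

theorem tripleDep_self (hs : s ∈ S) (h₁ : t₁ s ≠ s) (h₂ : t₂ s ≠ s) :
    tripleDep S t₁ t₂ c₁ c₂ s ⟨s, hs⟩ = 1 := by
  simp [tripleDep, h₁.symm, h₂.symm]

theorem eq_or_eq_of_tripleDep_ne_zero {u : S} (hu : tripleDep S t₁ t₂ c₁ c₂ s u ≠ 0) :
    (u : Fin d → ℂ) = s ∨ (u : Fin d → ℂ) = t₁ s ∨ (u : Fin d → ℂ) = t₂ s := by
  contrapose! hu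
  simp [tripleDep, hu.1, hu.2.1, hu.2.2]

theorem linearIndependent_tripleDep (B : Finset (Fin d → ℂ)) (σ : (Fin d → ℂ) → ℕ)
    (hσ : ∀ s ∈ S \ B, σ (t₁ s) < σ s ∧ σ (t₂ s) < σ s) :
    LinearIndependent ℂ (fun s : {x // x ∈ S \ B} => tripleDep S t₁ t₂ c₁ c₂ s.val) := by
  refine linearIndependent_of_triangular _ (fun s => ⟨s, (mem_sdiff.1 s.2).1⟩) (fun s => σ s)
    (fun s => ?_) (fun s t hts hne => ?_)
  · obtain ⟨h₁, h₂⟩ := hσ s s.2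
    rw [tripleDep_self S t₁ t₂ c₁ c₂ _ (ne_of_apply_ne σ h₁.ne) (ne_of_apply_ne σ h₂.ne)]
    exact one_ne_zero
  · obtain ⟨h₁, h₂⟩ := hσ t t.2
    rcases eq_or_eq_of_tripleDep_ne_zero S t₁ t₂ c₁ c₂ hne with h | h | h
    · exact absurd (Subtype.ext h.symm) hts
    · exact (congrArg σ h).trans_lt h₁
    · exact (congrArg σ h).trans_lt h₂

end Dependencies

open Classical in
theorem tripleDep_basis_general {d : ℕ} (S B : Finset (Fin d → ℂ)) (hBS : B ⊆ S)
    (hBind : LinearIndependent ℂ (fun b : B => (b : Fin d → ℂ)))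
    (hBspan : Submodule.span ℂ (B : Set (Fin d → ℂ)) = ⊤)
    (σ : (Fin d → ℂ) → ℕ)
    (t₁ t₂ : (Fin d → ℂ) → (Fin d → ℂ)) (c₁ c₂ : (Fin d → ℂ) → ℂ)
    (hdec : ∀ s ∈ S \ B, t₁ s ∈ S ∧ t₂ s ∈ S ∧ σ (t₁ s) < σ s ∧ σ (t₂ s) < σ s ∧
      s = c₁ s • t₁ s + c₂ s • t₂ s) :
    LinearIndependent ℂ (fun s : {x // x ∈ S \ B} => tripleDep S t₁ t₂ c₁ c₂ s.val) ∧
    Submodule.span ℂ (Set.range fun s : {x // x ∈ S \ B} => tripleDep S t₁ t₂ c₁ c₂ s.val)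
      = LinearMap.ker (evalD S) := by
  have hind := linearIndependent_tripleDep S t₁ t₂ c₁ c₂ B σ fun s hs =>
    ⟨(hdec s hs).2.2.1, (hdec s hs).2.2.2.1⟩
  refine ⟨hind, Submodule.eq_of_le_of_finrank_eq ?_ ?_⟩
  · rw [Submodule.span_le]
    rintro _ ⟨s, rfl⟩
    obtain ⟨h₁, h₂, -, -, hs⟩ := hdec s s.2
    exact tripleDep_mem_ker S t₁ t₂ c₁ c₂ (mem_sdiff.1 s.2).1 h₁ h₂ hs
  · rw [finrank_span_eq_card hind, finrank_ker_evalD S hBS hBind hBspan, Fintype.card_coe]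

open Classical in
/-- If a finite spanning set `S ⊆ ℂ^d` of nonzero vectors contains a distinguished basis
`B`, a size function `σ` is minimal on `B`, and every `s ∈ S∖B` is a combination of two
elements of `S` of strictly smaller `σ`-value, then the 3-term dependencies
`{D_s : s ∈ S∖B}` form a basis of the space of linear dependencies of `S`. -/
theorem tripleDep_basis {d : ℕ} (S B : Finset (Fin d → ℂ)) (hBS : B ⊆ S)
    (hnz : ∀ s ∈ S, s ≠ (0 : Fin d → ℂ))
    (hspan : Submodule.span ℂ (S : Set (Fin d → ℂ)) = ⊤)
    (hBind : LinearIndependent ℂ (fun b : B => (b : Fin d → ℂ)))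
    (hBspan : Submodule.span ℂ (B : Set (Fin d → ℂ)) = ⊤)
    (σ : (Fin d → ℂ) → ℕ) (hσmin : ∀ b ∈ B, ∀ s ∈ S, σ b ≤ σ s)
    (t₁ t₂ : (Fin d → ℂ) → (Fin d → ℂ)) (c₁ c₂ : (Fin d → ℂ) → ℂ)
    (hdec : ∀ s ∈ S \ B, t₁ s ∈ S ∧ t₂ s ∈ S ∧ σ (t₁ s) < σ s ∧ σ (t₂ s) < σ s ∧
      s = c₁ s • t₁ s + c₂ s • t₂ s) :
    LinearIndependent ℂ (fun s : {x // x ∈ S \ B} => tripleDep S t₁ t₂ c₁ c₂ s.val) ∧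
    Submodule.span ℂ (Set.range fun s : {x // x ∈ S \ B} => tripleDep S t₁ t₂ c₁ c₂ s.val)
      = LinearMap.ker (evalD S) :=
  tripleDep_basis_general S B hBS hBind hBspan σ t₁ t₂ c₁ c₂ hdec
end
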